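/- The connection ∇ on D defined by the Koszul-type formula 2g(∇_{QX}QY, QZ) = QX(g(QY,QZ)) + QY(g(QZ,QX)) - QZ(g(QX,QY)) + g(Q[QX,QY],QZ) - g(Q[QY,QZ],QX) + g(Q[QZ,QX],QY) + W(g)(QX)g(QY,QZ) + W(g)(QY)g(QZ,QX) - W(g)(QZ)g(QX,QY), together with ∇_{Q'X}QY = Q[Q'X, QY], is compatible with the Weyl substructure: ∇_{QX} g + W(g)(QX)·g = 0 for all vector fields X. -/

import Mathlib

/-!
Adding the Koszul formula for `(Y, Z)` to the one for `(Z, Y)`: by the symmetry of `g` and the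
antisymmetry of the bracket, the bracket terms cancel and the derivative and `W(g)` terms
collapse to `2 (QX (g(QY, QZ)) + W(g)(QX) g(QY, QZ))`, which is twice the compatibility identity.
-/

open VectorField

section Koszul

variable {E : Type*} [NormedAddCommGroup E] [NormedSpace ℝ E]
  (Q : E → E →L[ℝ] E) (g : E → E →L[ℝ] E →L[ℝ] ℝ) (w : E → E →L[ℝ] ℝ)

/-- The right-hand side of the Koszul-type formula for `2 g(∇_U V, W)`. -/
noncomputable def weylKoszul (U V W : E → E) (x : E) : ℝ :=
  fderiv ℝ (fun y => g y (V y) (W y)) x (U x)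
    + fderiv ℝ (fun y => g y (W y) (U y)) x (V x)
    - fderiv ℝ (fun y => g y (U y) (V y)) x (W x)
    + g x (Q x (lieBracket ℝ U V x)) (W x)
    - g x (Q x (lieBracket ℝ V W x)) (U x)
    + g x (Q x (lieBracket ℝ W U x)) (V x)
    + w x (U x) * g x (V x) (W x)
    + w x (V x) * g x (W x) (U x)
    - w x (W x) * g x (U x) (V x)

variable {g}

theorem weylKoszul_add_weylKoszul_swap (hsym : ∀ x v u, g x v u = g x u v)
    (U V W : E → E) (x : E) :
    weylKoszul Q g w U V W x + weylKoszul Q g w U W V x =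
      2 * (fderiv ℝ (fun y => g y (V y) (W y)) x (U x) + w x (U x) * g x (V x) (W x)) := by
  have hfun : ∀ A B : E → E, (fun y => g y (A y) (B y)) = fun y => g y (B y) (A y) :=
    fun A B => funext fun y => hsym y _ _
  simp only [weylKoszul, hfun W V, hfun U W, hfun V U, lieBracket_swap (V := W) (W := V),
    lieBracket_swap (V := V) (W := U), lieBracket_swap (V := U) (W := W), map_neg,
    neg_apply, hsym x (W x) (V x), hsym x (U x) (W x), hsym x (V x) (U x)]
  ring

end Koszul

/-- the connection defined by the Koszul-type formula (6) (hypothesis `hK`,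
where `[U,V] x = (fderiv V x)(U x) - (fderiv U x)(V x)`), together with
`∇_{Q'X} QY = Q[Q'X, QY]`, is compatible with the Weyl substructure:
`(∇_{QX} g)(QY, QZ) = - W(g)(QX) g(QY, QZ)` for all vector fields `X, Y, Z`.
The manifold is modelled on the normed space `E`, `Q` is the projector field onto the
distribution `D`, `g` the (fiberwise bilinear) metric on `D` and `w = W(g)`. -/
theorem stmt5 {E : Type*} [NormedAddCommGroup E] [NormedSpace ℝ E]
    (Q : E → E →L[ℝ] E) (g : E → E →L[ℝ] E →L[ℝ] ℝ) (w : E → E →L[ℝ] ℝ)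
    (nabla : (E → E) → (E → E) → E → E)
    (hsym : ∀ x v u, g x v u = g x u v)
    (hK : ∀ X Y Z : E → E, ∀ x : E,
      2 * g x (nabla (fun y => Q y (X y)) (fun y => Q y (Y y)) x) (Q x (Z x)) =
        fderiv ℝ (fun y => g y (Q y (Y y)) (Q y (Z y))) x (Q x (X x))
        + fderiv ℝ (fun y => g y (Q y (Z y)) (Q y (X y))) x (Q x (Y x))
        - fderiv ℝ (fun y => g y (Q y (X y)) (Q y (Y y))) x (Q x (Z x))
        + g x (Q x (fderiv ℝ (fun y => Q y (Y y)) x (Q x (X x))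
            - fderiv ℝ (fun y => Q y (X y)) x (Q x (Y x)))) (Q x (Z x))
        - g x (Q x (fderiv ℝ (fun y => Q y (Z y)) x (Q x (Y x))
            - fderiv ℝ (fun y => Q y (Y y)) x (Q x (Z x)))) (Q x (X x))
        + g x (Q x (fderiv ℝ (fun y => Q y (X y)) x (Q x (Z x))
            - fderiv ℝ (fun y => Q y (Z y)) x (Q x (X x)))) (Q x (Y x))
        + w x (Q x (X x)) * g x (Q x (Y x)) (Q x (Z x))
        + w x (Q x (Y x)) * g x (Q x (Z x)) (Q x (X x))
        - w x (Q x (Z x)) * g x (Q x (X x)) (Q x (Y x))) :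
    ∀ X Y Z : E → E, ∀ x : E,
      fderiv ℝ (fun y => g y (Q y (Y y)) (Q y (Z y))) x (Q x (X x))
        - g x (nabla (fun y => Q y (X y)) (fun y => Q y (Y y)) x) (Q x (Z x))
        - g x (Q x (Y x)) (nabla (fun y => Q y (X y)) (fun y => Q y (Z y)) x)
      = -(w x (Q x (X x))) * g x (Q x (Y x)) (Q x (Z x)) := by
  intro X Y Z x
  set QX := fun y => Q y (X y)
  set QY := fun y => Q y (Y y)
  set QZ := fun y => Q y (Z y)
  have hYZ : 2 * g x (nabla QX QY x) (QZ x) = weylKoszul Q g w QX QY QZ x := hK X Y Z x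
  have hZY : 2 * g x (nabla QX QZ x) (QY x) = weylKoszul Q g w QX QZ QY x := hK X Z Y x
  have hsum := weylKoszul_add_weylKoszul_swap Q w hsym QX QY QZ x
  rw [hsym x (QY x)]
  linarith
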